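/- arXiv:0704.0838 — 2 statements merged into one kernel-verified Lean document; each statement's English description precedes it below -/
import Mathlib

section
/- Let θ_i = p(1−p)^{i−1} for i ≥ 1 with 0 < p < 1 (geometric distribution). Then for every positive integer m, ∑_{i>m} θ_i = (1−p)^m, and ∑_{i>m} θ_i·log₂ i ≤ (1−p)^m·(log₂(m+1) + (log₂ e)·(1−p)/p). -/
/-!
Writing `q = 1 - p`, the tail is `p q^m ∑ q^i = q^m`. For the weighted tail, concavity of the
logarithm gives `log (m + 1 + i) ≤ log (m + 1) + i / (m + 1) ≤ log (m + 1) + i`, and the resulting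
majorant sums in closed form by `∑ i q^i = q / (1 - q)^2`.
-/

open Real

section GeometricTail

variable {𝕜 : Type*} [NormedField 𝕜] {p : 𝕜}

lemma ne_zero_of_norm_one_sub_lt_one (hp : ‖1 - p‖ < 1) : p ≠ 0 := by
  rintro rfl
  simp at hp

lemma hasSum_mul_one_sub_pow_add (hp : ‖1 - p‖ < 1) (m : ℕ) :
    HasSum (fun i : ℕ => p * (1 - p) ^ (m + i)) ((1 - p) ^ m) := by
  have h := (hasSum_geometric_of_norm_lt_one hp).mul_left (p * (1 - p) ^ m)
  rw [sub_sub_cancel, mul_right_comm, mul_inv_cancel₀ (ne_zero_of_norm_one_sub_lt_one hp),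
    one_mul] at h
  exact h.congr_fun fun i => by ring

lemma hasSum_mul_one_sub_pow_add_mul_coe (hp : ‖1 - p‖ < 1) (m : ℕ) :
    HasSum (fun i : ℕ => p * (1 - p) ^ (m + i) * i) ((1 - p) ^ (m + 1) / p) := by
  have hp0 := ne_zero_of_norm_one_sub_lt_one hp
  have h := (hasSum_coe_mul_geometric_of_norm_lt_one hp).mul_left (p * (1 - p) ^ m)
  rw [show p * (1 - p) ^ m * ((1 - p) / (1 - (1 - p)) ^ 2) = (1 - p) ^ (m + 1) / p by
    rw [sub_sub_cancel]; field_simp; ring] at h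
  exact h.congr_fun fun i => by ring

end GeometricTail

lemma Real.log_add_le_log_add_div {x t : ℝ} (hx : 0 < x) (hxt : 0 < x + t) :
    log (x + t) ≤ log x + t / x := by
  have h := log_le_sub_one_of_pos (div_pos hxt hx)
  rw [log_div hxt.ne' hx.ne', add_div, div_self hx.ne'] at h
  linarith

lemma Real.logb_add_le_logb_add_mul {b x t : ℝ} (hb : 1 < b) (hx : 1 ≤ x) (ht : 0 ≤ t) :
    logb b (x + t) ≤ logb b x + logb b (exp 1) * t := by
  have hlogb := log_pos hb
  have hlog : log (x + t) ≤ log x + t :=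
    (log_add_le_log_add_div (by linarith) (by linarith)).trans
      (add_le_add_right (div_le_self ht hx) _)
  simp only [logb, log_exp]
  rw [div_mul_eq_mul_div, one_mul, ← add_div]
  exact div_le_div_of_nonneg_right hlog hlogb.le

theorem stmt_8_general (p : ℝ) (hp : 0 < p) (hp1 : p < 1) (m : ℕ) :
    (∑' i : ℕ, p * (1 - p) ^ (m + i) = (1 - p) ^ m) ∧
    (∑' i : ℕ, p * (1 - p) ^ (m + i) * Real.logb 2 ((m + 1 + i : ℕ) : ℝ) ≤
      (1 - p) ^ m *
        (Real.logb 2 ((m : ℝ) + 1) + Real.logb 2 (Real.exp 1) * (1 - p) / p)) := by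
  have hq : ‖1 - p‖ < 1 := by rw [norm_eq_abs, abs_lt]; constructor <;> linarith
  set L := logb 2 ((m : ℝ) + 1)
  set C := logb 2 (exp 1)
  have hmajorant : HasSum (fun i : ℕ => p * (1 - p) ^ (m + i) * (L + C * i))
      ((1 - p) ^ m * (L + C * (1 - p) / p)) := by
    have h := ((hasSum_mul_one_sub_pow_add hq m).mul_right L).add
      ((hasSum_mul_one_sub_pow_add_mul_coe hq m).mul_left C)
    rw [show (1 - p) ^ m * L + C * ((1 - p) ^ (m + 1) / p) = (1 - p) ^ m * (L + C * (1 - p) / p) by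
      ring] at h
    exact h.congr_fun fun i => by ring
  have hweight (i : ℕ) : 0 ≤ p * (1 - p) ^ (m + i) := by
    have : 0 ≤ 1 - p := by linarith
    positivity
  have hbound (i : ℕ) :
      p * (1 - p) ^ (m + i) * logb 2 ((m + 1 + i : ℕ) : ℝ) ≤ p * (1 - p) ^ (m + i) * (L + C * i) := by
    refine mul_le_mul_of_nonneg_left ?_ (hweight i)
    push_cast
    exact logb_add_le_logb_add_mul one_lt_two (by simp) i.cast_nonneg
  have hnonneg (i : ℕ) : 0 ≤ p * (1 - p) ^ (m + i) * logb 2 ((m + 1 + i : ℕ) : ℝ) :=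
    mul_nonneg (hweight i) (logb_nonneg one_lt_two (Nat.one_le_cast.mpr (by omega)))
  have hsummable := Summable.of_nonneg_of_le hnonneg hbound hmajorant.summable
  refine ⟨(hasSum_mul_one_sub_pow_add hq m).tsum_eq, ?_⟩
  exact (hsummable.tsum_le_tsum hbound hmajorant.summable).trans_eq hmajorant.tsum_eq

/-- Tail estimates for the geometric distribution `θ_i = p(1−p)^{i−1}` (`i ≥ 1`):
`∑_{i>m} θ_i = (1−p)^m` and
`∑_{i>m} θ_i log₂ i ≤ (1−p)^m (log₂(m+1) + (log₂ e)(1−p)/p)`. -/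
theorem stmt_8 (p : ℝ) (hp : 0 < p) (hp1 : p < 1) (m : ℕ) (hm : 0 < m) :
    (∑' i : ℕ, p * (1 - p) ^ (m + i) = (1 - p) ^ m) ∧
    (∑' i : ℕ, p * (1 - p) ^ (m + i) * Real.logb 2 ((m + 1 + i : ℕ) : ℝ) ≤
      (1 - p) ^ m *
        (Real.logb 2 ((m : ℝ) + 1) + Real.logb 2 (Real.exp 1) * (1 - p) / p)) :=
  stmt_8_general p hp hp1 m
end

section
/- Let x^n be a sequence of n symbols from {1,…,k}, let n_x(i) be the count of symbol i, and let θ̂_M = (θ̂_{1,M},…,θ̂_{k,M}) be a maximizer of ∏_i φ_i^{n_x(i)} over all monotonic probability vectors φ_1 ≥ φ_2 ≥ … ≥ φ_k > 0, where k is the maximal symbol occurring in x^n (so every i ≤ k with n_x(i) ≥ 1 contributes). Then the largest component satisfies θ̂_{1,M} ≥ n_x(1)/n. -/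
/-!
For `q ∈ [θ₁, 1)` the vector `(q, θ₂ (1 - q)/(1 - θ₁), …, θₖ (1 - q)/(1 - θ₁))` is again a
monotone probability vector, and its likelihood is a positive constant times `q ^ n₁ (1 - q) ^ S`,
where `S` is the number of occurrences of the symbols `2, …, k`. Maximality of `θ` makes
`q = θ₁` a one-sided local maximum of `n₁ log q + S log (1 - q)`, so the right derivative
`n₁/θ₁ - S/(1 - θ₁)` is nonpositive, i.e. `n₁ ≤ (n₁ + S) θ₁ ≤ n θ₁`.
-/

open Finset

/-- The number of occurrences of symbol `i` in the sequence `x` of length `n`. -/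
def cnt (n : ℕ) (x : Fin n → ℕ) (i : ℕ) : ℕ :=
  (Finset.univ.filter fun t => x t = i).card

theorem sum_cnt_le (n : ℕ) (x : Fin n → ℕ) (s : Finset ℕ) : ∑ i ∈ s, cnt n x i ≤ n := by
  simp only [cnt]
  rw [sum_card_fiberwise_eq_card_filter]
  exact (card_filter_le _ _).trans (by simp)

theorem le_add_mul_of_isLocalMaxOn_log {a b p : ℝ} (hp0 : 0 < p) (hp1 : p < 1)
    (hmax : IsLocalMaxOn (fun q => a * Real.log q + b * Real.log (1 - q)) (Set.Ici p) p) :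
    a ≤ (a + b) * p := by
  have hderiv : HasDerivAt (fun q => a * Real.log q + b * Real.log (1 - q))
      (a / p - b / (1 - p)) p := by
    have h1 := ((hasDerivAt_id p).log hp0.ne').const_mul a
    have h2 := (((hasDerivAt_id p).const_sub 1).log (by simp; linarith)).const_mul b
    exact (h1.add h2).congr_deriv (by simp only [id]; ring)
  have hone : (1 : ℝ) ∈ posTangentConeAt (Set.Ici p) p := by
    rw [one_mem_posTangentConeAt_iff_frequently]
    exact (eventually_nhdsWithin_of_forall fun x (hx : x ∈ Set.Ioi p) =>
      Set.mem_Ici.2 (le_of_lt hx)).frequently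
  have hslope : a / p ≤ b / (1 - p) := by
    simpa using hmax.hasFDerivWithinAt_nonpos hderiv.hasFDerivAt.hasFDerivWithinAt hone
  rw [div_le_div_iff₀ hp0 (by linarith)] at hslope
  linarith

theorem le_add_mul_of_forall_pow_mul_pow_le {a b : ℕ} {p : ℝ} (hp0 : 0 < p) (hp1 : p < 1)
    (hmax : ∀ q ∈ Set.Ico p 1, q ^ a * (1 - q) ^ b ≤ p ^ a * (1 - p) ^ b) :
    (a : ℝ) ≤ (a + b) * p := by
  have hlog : ∀ q, 0 < q → q < 1 →
      Real.log (q ^ a * (1 - q) ^ b) = a * Real.log q + b * Real.log (1 - q) := by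
    intro q hq0 hq1
    rw [Real.log_mul (by positivity) (pow_ne_zero _ (by linarith)), Real.log_pow, Real.log_pow]
  refine le_add_mul_of_isLocalMaxOn_log hp0 hp1 ?_
  filter_upwards [Ico_mem_nhdsGE hp1] with q ⟨hpq, hq1⟩
  have hq0 : 0 < q := hp0.trans_le hpq
  rw [← hlog q hq0 hq1, ← hlog p hp0 hp1]
  exact Real.log_le_log (mul_pos (pow_pos hq0 _) (pow_pos (by linarith) _)) (hmax q ⟨hpq, hq1⟩)

def IsMonotoneProbVec (k : ℕ) (φ : ℕ → ℝ) : Prop :=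
  (∀ i ∈ Ico 1 k, φ (i + 1) ≤ φ i) ∧ (∀ i ∈ Icc 1 k, 0 < φ i) ∧ ∑ i ∈ Icc 1 k, φ i = 1

def likelihood (k : ℕ) (c : ℕ → ℕ) (φ : ℕ → ℝ) : ℝ :=
  ∏ i ∈ Icc 1 k, φ i ^ c i

def IsMonotoneMLE (k : ℕ) (c : ℕ → ℕ) (θ : ℕ → ℝ) : Prop :=
  IsMonotoneProbVec k θ ∧ ∀ φ, IsMonotoneProbVec k φ → likelihood k c φ ≤ likelihood k c θ

noncomputable def reweightHead (θ : ℕ → ℝ) (q : ℝ) : ℕ → ℝ :=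
  Function.update (fun i => (1 - q) / (1 - θ 1) * θ i) 1 q

@[simp]
theorem reweightHead_one (θ : ℕ → ℝ) (q : ℝ) : reweightHead θ q 1 = q := by
  simp [reweightHead]

theorem reweightHead_of_ne (θ : ℕ → ℝ) (q : ℝ) {i : ℕ} (hi : i ≠ 1) :
    reweightHead θ q i = (1 - q) / (1 - θ 1) * θ i := by
  simp [reweightHead, hi]

theorem reweightHead_self {θ : ℕ → ℝ} (hθ1 : θ 1 ≠ 1) : reweightHead θ (θ 1) = θ := by
  funext i
  rcases eq_or_ne i 1 with rfl | hi
  · exact reweightHead_one θ _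
  · rw [reweightHead_of_ne θ _ hi, div_self (sub_ne_zero.2 hθ1.symm), one_mul]

theorem likelihood_reweightHead {k : ℕ} (hk : 1 ≤ k) (c : ℕ → ℕ) (θ : ℕ → ℝ) (q : ℝ) :
    likelihood k c (reweightHead θ q) = q ^ c 1 * (1 - q) ^ (∑ i ∈ Ioc 1 k, c i) *
      ((∏ i ∈ Ioc 1 k, θ i ^ c i) / (1 - θ 1) ^ (∑ i ∈ Ioc 1 k, c i)) := by
  rw [likelihood, ← mul_prod_Ioc_eq_prod_Icc hk, reweightHead_one,
    prod_congr rfl fun i hi => by rw [reweightHead_of_ne θ q (mem_Ioc.1 hi).1.ne', mul_pow],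
    prod_mul_distrib, prod_pow_eq_pow_sum, div_pow]
  ring

namespace IsMonotoneProbVec

variable {k : ℕ} {θ : ℕ → ℝ}

theorem one_le (hθ : IsMonotoneProbVec k θ) : 1 ≤ k := by
  by_contra! hk
  have hsum := hθ.2.2
  rw [Icc_eq_empty_of_lt hk, sum_empty] at hsum
  exact zero_ne_one hsum

theorem head_pos (hθ : IsMonotoneProbVec k θ) : 0 < θ 1 :=
  hθ.2.1 1 (by simpa using hθ.one_le)

theorem head_le_one (hθ : IsMonotoneProbVec k θ) : θ 1 ≤ 1 := by
  rw [← hθ.2.2, ← add_sum_Ioc_eq_sum_Icc hθ.one_le, le_add_iff_nonneg_right]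
  exact sum_nonneg fun i hi => (hθ.2.1 i (Ioc_subset_Icc_self hi)).le

theorem reweightHead (hθ : IsMonotoneProbVec k θ) {q : ℝ} (hθ1 : θ 1 < 1) (hq : θ 1 ≤ q)
    (hq1 : q < 1) : IsMonotoneProbVec k (_root_.reweightHead θ q) := by
  have hk := hθ.one_le
  obtain ⟨hmono, hpos, hsum⟩ := hθ
  set r := (1 - q) / (1 - θ 1)
  have hr0 : 0 < r := div_pos (by linarith) (by linarith)
  have hr1 : r ≤ 1 := (div_le_one (by linarith)).2 (by linarith)
  have hIoc : ∀ {i}, i ∈ Ioc 1 k → _root_.reweightHead θ q i = r * θ i := fun hi =>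
    reweightHead_of_ne θ q (mem_Ioc.1 hi).1.ne'
  refine ⟨fun i hi => ?_, fun i hi => ?_, ?_⟩
  · have hi' := mem_Ico.1 hi
    rw [hIoc (i := i + 1) (mem_Ioc.2 ⟨by omega, by omega⟩)]
    rcases eq_or_ne i 1 with rfl | hi1
    · have h2 : 0 < θ 2 := hpos 2 (mem_Icc.2 ⟨by omega, by omega⟩)
      calc r * θ 2 ≤ θ 2 := mul_le_of_le_one_left h2.le hr1
        _ ≤ θ 1 := hmono 1 hi
        _ ≤ _root_.reweightHead θ q 1 := by rwa [reweightHead_one]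
    · rw [reweightHead_of_ne θ q hi1]
      exact mul_le_mul_of_nonneg_left (hmono i hi) hr0.le
  · rcases eq_or_ne i 1 with rfl | hi1
    · rw [reweightHead_one]
      exact (hpos 1 hi).trans_le hq
    · rw [reweightHead_of_ne θ q hi1]
      exact mul_pos hr0 (hpos i hi)
  · rw [← add_sum_Ioc_eq_sum_Icc hk] at hsum ⊢
    rw [reweightHead_one, sum_congr rfl fun i hi => hIoc hi, ← mul_sum,
      show ∑ i ∈ Ioc 1 k, θ i = 1 - θ 1 by linarith, div_mul_cancel₀ _ (by linarith)]
    ring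

end IsMonotoneProbVec

theorem IsMonotoneMLE.count_le_mul_head {k : ℕ} {c : ℕ → ℕ} {θ : ℕ → ℝ}
    (h : IsMonotoneMLE k c θ) : (c 1 : ℝ) ≤ (c 1 + ∑ i ∈ Ioc 1 k, c i : ℕ) * θ 1 := by
  obtain ⟨hθ, hmax⟩ := h
  rcases hθ.head_le_one.lt_or_eq with hθ1 | hθ1
  · rw [Nat.cast_add]
    refine le_add_mul_of_forall_pow_mul_pow_le hθ.head_pos hθ1 fun q ⟨hq, hq1⟩ => ?_
    have hrest : 0 < (∏ i ∈ Ioc 1 k, θ i ^ c i) / (1 - θ 1) ^ (∑ i ∈ Ioc 1 k, c i) :=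
      div_pos (prod_pos fun i hi => pow_pos (hθ.2.1 i (Ioc_subset_Icc_self hi)) _)
        (pow_pos (by linarith) _)
    have hlik := hmax _ (hθ.reweightHead hθ1 hq hq1)
    conv_rhs at hlik => rw [← reweightHead_self hθ1.ne]
    rw [likelihood_reweightHead hθ.one_le, likelihood_reweightHead hθ.one_le] at hlik
    exact le_of_mul_le_mul_right hlik hrest
  · rw [hθ1, mul_one, Nat.cast_le]
    exact Nat.le_add_right _ _

theorem stmt_10_general (n k : ℕ) (x : Fin n → ℕ)
    (θM : ℕ → ℝ)
    (hmono : ∀ i ∈ Finset.Ico 1 k, θM (i + 1) ≤ θM i)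
    (hpos : ∀ i ∈ Finset.Icc 1 k, 0 < θM i)
    (hsum : ∑ i ∈ Finset.Icc 1 k, θM i = 1)
    (hmax : ∀ φ : ℕ → ℝ,
      (∀ i ∈ Finset.Ico 1 k, φ (i + 1) ≤ φ i) →
      (∀ i ∈ Finset.Icc 1 k, 0 < φ i) →
      (∑ i ∈ Finset.Icc 1 k, φ i = 1) →
      ∏ i ∈ Finset.Icc 1 k, φ i ^ cnt n x i ≤
        ∏ i ∈ Finset.Icc 1 k, θM i ^ cnt n x i) :
    (cnt n x 1 : ℝ) / n ≤ θM 1 := by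
  have hθ : IsMonotoneMLE k (cnt n x) θM :=
    ⟨⟨hmono, hpos, hsum⟩, fun φ hφ => hmax φ hφ.1 hφ.2.1 hφ.2.2⟩
  have hcount : cnt n x 1 + ∑ i ∈ Ioc 1 k, cnt n x i ≤ n := by
    rw [add_sum_Ioc_eq_sum_Icc hθ.1.one_le]
    exact sum_cnt_le n x _
  have hθ1 := hθ.1.head_pos
  refine div_le_of_le_mul₀ n.cast_nonneg hθ1.le ?_
  calc (cnt n x 1 : ℝ) ≤ (cnt n x 1 + ∑ i ∈ Ioc 1 k, cnt n x i : ℕ) * θM 1 :=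
        hθ.count_le_mul_head
    _ ≤ n * θM 1 := by gcongr
    _ = θM 1 * n := mul_comm _ _

/-- The monotonic ML estimator assigns the most likely symbol probability at least
its empirical frequency `n_x(1)/n`. -/
theorem stmt_10 (n k : ℕ) (hn : 0 < n) (hk : 0 < k) (x : Fin n → ℕ)
    (hx : ∀ t, 1 ≤ x t ∧ x t ≤ k) (hxk : ∃ t, x t = k)
    (θM : ℕ → ℝ)
    (hmono : ∀ i ∈ Finset.Ico 1 k, θM (i + 1) ≤ θM i)
    (hpos : ∀ i ∈ Finset.Icc 1 k, 0 < θM i)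
    (hsum : ∑ i ∈ Finset.Icc 1 k, θM i = 1)
    (hmax : ∀ φ : ℕ → ℝ,
      (∀ i ∈ Finset.Ico 1 k, φ (i + 1) ≤ φ i) →
      (∀ i ∈ Finset.Icc 1 k, 0 < φ i) →
      (∑ i ∈ Finset.Icc 1 k, φ i = 1) →
      ∏ i ∈ Finset.Icc 1 k, φ i ^ cnt n x i ≤
        ∏ i ∈ Finset.Icc 1 k, θM i ^ cnt n x i) :
    (cnt n x 1 : ℝ) / n ≤ θM 1 :=
  stmt_10_general n k x θM hmono hpos hsum hmax
end
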